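/- arXiv:1403.1394 — 15 statements merged into one kernel-verified Lean document; each statement's English description precedes it below -/
import Mathlib

section
/- Let R be an integral domain and let I be an ideal of R. If for every a ∈ I the intersection of the ideals a^n R over all n ≥ 1 is zero, then the same holds for every a in the radical of I. -/
theorem stmt_1 {R : Type*} [CommRing R] [IsDomain R] (I : Ideal R)
    (h : ∀ a ∈ I, (⨅ n : ℕ, Ideal.span {a ^ (n + 1)}) = ⊥) :
    ∀ a ∈ I.radical, (⨅ n : ℕ, Ideal.span {a ^ (n + 1)}) = ⊥ := by
  intro a ha
  obtain ⟨k, hk⟩ := ha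
  rcases Nat.eq_zero_or_pos k with rfl | hkpos
  · simp only [pow_zero] at hk
    exact h a (I.eq_top_iff_one.mpr hk ▸ Submodule.mem_top)
  · have hb := h (a ^ k) hk
    refine le_antisymm ?_ bot_le
    rw [← hb]
    refine le_iInf fun n => (iInf_le _ (k * (n + 1) - 1)).trans ?_
    rw [← pow_mul]
    apply Ideal.span_singleton_le_span_singleton.mpr
    apply pow_dvd_pow
    omega
end

section
/- Let R be an integral domain and let a be a nonunit of R that belongs to only finitely many maximal ideals. Then ⋂_{n≥1} a^n R = (0) if and only if there exists a maximal ideal M containing a such that ⋂_{n≥1} a^n R_M = (0). -/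
theorem stmt_2 {R : Type*} [CommRing R] [IsDomain R] (a : R) (ha : ¬IsUnit a)
    (hfin : {M : Ideal R | M.IsMaximal ∧ a ∈ M}.Finite) :
    (⨅ n : ℕ, Ideal.span {a ^ (n + 1)}) = ⊥ ↔
      ∃ (M : Ideal R) (hM : M.IsMaximal), a ∈ M ∧
        (⨅ n : ℕ, Ideal.span
          {(algebraMap R (@Localization.AtPrime R _ M hM.isPrime)) a ^ (n + 1)}) = ⊥ := by
  classical
  constructor
  · intro h
    by_cases ha0 : a = 0
    · obtain ⟨M, hM⟩ := Ideal.exists_maximal R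
      refine ⟨M, hM, ha0 ▸ M.zero_mem, ?_⟩
      subst ha0
      simp
    · by_contra hcon
      push_neg at hcon
      obtain ⟨M0, hM0⟩ := Ideal.exists_le_maximal (Ideal.span {a})
        (by rwa [Ne, Ideal.span_singleton_eq_top])
      have key : ∀ (M : Ideal R) (hM : M.IsMaximal), a ∈ M → ∃ t : R, t ≠ 0 ∧ ∀ n : ℕ,
          algebraMap R (@Localization.AtPrime R _ M hM.isPrime) t ∈
            Ideal.span {algebraMap R (@Localization.AtPrime R _ M hM.isPrime) a ^ (n + 1)} := by
        intro M hM haM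
        haveI := hM.isPrime
        have hne := hcon M hM haM
        obtain ⟨y, hy, hy0⟩ := (Submodule.ne_bot_iff _).mp hne
        obtain ⟨⟨t, s⟩, hts⟩ := IsLocalization.surj M.primeCompl y
        have hft : algebraMap R (Localization.AtPrime M) t =
            y * algebraMap R (Localization.AtPrime M) s := hts.symm
        refine ⟨t, ?_, ?_⟩
        · rintro rfl
          apply hy0
          have hu := IsLocalization.map_units (Localization.AtPrime M) s
          rw [map_zero] at hft
          exact (hu.mul_left_eq_zero).mp hft.symm
        · intro n
          rw [hft]
          exact Ideal.mul_mem_right _ _ ((Ideal.mem_iInf.mp hy n))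
      choose t ht0 hmem using key
      set S := hfin.toFinset with hS
      have hmemS : ∀ M : Ideal R, M ∈ S ↔ M.IsMaximal ∧ a ∈ M := fun M => hfin.mem_toFinset
      set x : R := ∏ M ∈ S.attach, t M.1 ((hmemS M.1).mp M.2).1 ((hmemS M.1).mp M.2).2 with hx
      have hx0 : x ≠ 0 := by
        rw [hx]
        exact Finset.prod_ne_zero_iff.mpr fun M _ => ht0 _ _ _
      apply hx0
      rw [← Submodule.mem_bot (R := R), ← h, Ideal.mem_iInf]
      intro n
      apply Ideal.mem_of_localization_maximal
      intro P hP
      haveI := hP.isPrime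
      rw [Ideal.map_span, Set.image_singleton]
      by_cases haP : a ∈ P
      · have hPS : P ∈ S := (hmemS P).mpr ⟨hP, haP⟩
        rw [hx, map_prod, ← Finset.mul_prod_erase _ _ (Finset.mem_attach S ⟨P, hPS⟩)]
        apply Ideal.mul_mem_right
        have := hmem P hP haP n
        rwa [map_pow]
      · have hu : IsUnit (algebraMap R (Localization.AtPrime P) (a ^ (n + 1))) := by
          rw [map_pow]
          exact (IsLocalization.map_units (M := P.primeCompl) (Localization.AtPrime P) ⟨a, haP⟩).pow _
        rw [Ideal.span_singleton_eq_top.mpr hu]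
        exact Submodule.mem_top
  · rintro ⟨M, hM, haM, h⟩
    haveI := hM.isPrime
    have hinj : Function.Injective (algebraMap R (Localization.AtPrime M)) := by
      apply IsLocalization.injective (M := M.primeCompl) (Localization.AtPrime M)
      intro s hs
      exact mem_nonZeroDivisors_of_ne_zero fun h0 => hs (h0 ▸ M.zero_mem)
    rw [eq_bot_iff]
    intro x hx
    rw [Ideal.mem_iInf] at hx
    rw [Submodule.mem_bot]
    apply hinj
    rw [map_zero, ← Submodule.mem_bot (R := Localization.AtPrime M), ← h, Ideal.mem_iInf]
    intro n
    rw [Ideal.mem_span_singleton, ← map_pow]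
    exact map_dvd _ (Ideal.mem_span_singleton.mp (hx n))
end

section
/- If R is an Archimedean integral domain and P is a principal prime ideal of R, then the localization R_P is a discrete valuation ring. -/
/-!
Write `P = (p)` with `p` prime. The Archimedean condition for `p` says exactly that every nonzero
`r : R` has finite `p`-multiplicity, i.e. `r = p ^ n * c` with `p ∤ c`. Such a `c` lies outside
`P`, so it becomes a unit in `R_P`; hence every nonzero element of `R_P` is a unit times a power
of the image `π` of `p`, which is a prime element since it generates the maximal ideal of `R_P`.
-/

open IsLocalRing

theorem finiteMultiplicity_of_iInf_span_pow_eq_bot {R : Type*} [CommSemiring R] {p : R}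
    (h : ⨅ n : ℕ, Ideal.span {p ^ (n + 1)} = ⊥) {r : R} (hr : r ≠ 0) :
    FiniteMultiplicity p r := by
  by_contra! hdvd
  refine hr (Ideal.mem_bot.mp ?_)
  rw [← h, Ideal.mem_iInf]
  exact fun n => Ideal.mem_span_singleton.mpr (hdvd n)

namespace Localization.AtPrime

variable {R : Type*} [CommRing R] {p : R} [(Ideal.span {p}).IsPrime]

theorem isUnit_algebraMap_of_not_dvd {c : R} (hc : ¬p ∣ c) :
    IsUnit (algebraMap R (Localization.AtPrime (Ideal.span {p})) c) :=
  (IsLocalization.AtPrime.isUnit_to_map_iff _ _ c).mpr fun hcp =>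
    hc (Ideal.mem_span_singleton.mp hcp)

theorem maximalIdeal_eq_span_algebraMap :
    maximalIdeal (Localization.AtPrime (Ideal.span {p})) =
      Ideal.span {algebraMap R (Localization.AtPrime (Ideal.span {p})) p} := by
  rw [← Localization.AtPrime.map_eq_maximalIdeal, Ideal.map_span, Set.image_singleton]

theorem prime_algebraMap [IsDomain R] (hp0 : p ≠ 0) :
    Prime (algebraMap R (Localization.AtPrime (Ideal.span {p})) p) := by
  have hπ0 : algebraMap R (Localization.AtPrime (Ideal.span {p})) p ≠ 0 :=
    (map_ne_zero_iff _
      (IsLocalization.injective _ (Ideal.span {p}).primeCompl_le_nonZeroDivisors)).mpr hp0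
  rw [← Ideal.span_singleton_prime hπ0, ← maximalIdeal_eq_span_algebraMap]
  exact (maximalIdeal.isMaximal _).isPrime

theorem isDiscreteValuationRing_of_finiteMultiplicity [IsDomain R] (hp0 : p ≠ 0)
    (hfin : ∀ r : R, r ≠ 0 → FiniteMultiplicity p r) :
    IsDiscreteValuationRing (Localization.AtPrime (Ideal.span {p})) := by
  set f := algebraMap R (Localization.AtPrime (Ideal.span {p}))
  refine .ofHasUnitMulPowIrreducibleFactorization
    ⟨f p, (prime_algebraMap hp0).irreducible, fun {x} hx => ?_⟩
  obtain ⟨⟨r, s⟩, hrs : x * f s = f r⟩ := IsLocalization.surj (Ideal.span {p}).primeCompl x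
  have hs : IsUnit (f s) := IsLocalization.map_units _ s
  have hr : r ≠ 0 := by
    rintro rfl
    rw [map_zero] at hrs
    exact hx (hs.mul_left_eq_zero.mp hrs)
  obtain ⟨c, hrc, hc⟩ := (hfin r hr).exists_eq_pow_mul_and_not_dvd
  refine ⟨multiplicity p r, ?_⟩
  have hfactor : f p ^ multiplicity p r * f c = x * f s := by
    rw [hrs, ← map_pow, ← map_mul, ← hrc]
  exact (associated_mul_unit_right _ _ (isUnit_algebraMap_of_not_dvd hc)).trans
    (hfactor ▸ associated_mul_unit_left _ _ hs)

end Localization.AtPrime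

theorem stmt_3 {R : Type*} [CommRing R] [IsDomain R]
    (arch : ∀ r : R, ¬IsUnit r → (⨅ n : ℕ, Ideal.span {r ^ (n + 1)}) = ⊥)
    (P : Ideal R) (hP : P.IsPrime) (hP0 : P ≠ ⊥) (hprin : P.IsPrincipal) :
    IsDiscreteValuationRing (@Localization.AtPrime R _ P hP) := by
  obtain ⟨p, rfl⟩ := hprin.principal
  have hp0 : p ≠ 0 := by
    rintro rfl
    exact hP0 (Submodule.span_singleton_eq_bot.mpr rfl)
  have hp : Prime p := (Ideal.span_singleton_prime hp0).mp hP
  exact Localization.AtPrime.isDiscreteValuationRing_of_finiteMultiplicity hp0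
    fun r hr => finiteMultiplicity_of_iInf_span_pow_eq_bot (arch p hp.not_isUnit) hr
end

section
/- If R is an Archimedean integral domain in which every maximal ideal is principal, then R is a principal ideal domain. -/
theorem stmt_4 {R : Type*} [CommRing R] [IsDomain R]
    (arch : ∀ r : R, ¬IsUnit r → (⨅ n : ℕ, Ideal.span {r ^ (n + 1)}) = ⊥)
    (hprin : ∀ M : Ideal R, M.IsMaximal → M.IsPrincipal) :
    IsPrincipalIdealRing R := by
  apply IsPrincipalIdealRing.of_prime
  intro P hP
  obtain ⟨M, hM, hPM⟩ := Ideal.exists_le_maximal P hP.ne_top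
  obtain ⟨m, hm⟩ := (hprin M hM).principal
  by_cases hmP : m ∈ P
  · have : M ≤ P := by
      rw [hm, Ideal.submodule_span_eq, Ideal.span_le]
      simpa using hmP
    have : P = M := le_antisymm hPM this
    rw [this, hm]; exact ⟨⟨m, rfl⟩⟩
  · -- m ∉ P; show P = ⊥
    have hmunit : ¬IsUnit m := by
      intro hu
      have : M = ⊤ := by
        rw [hm]; exact Ideal.eq_top_of_isUnit_mem _ (Ideal.mem_span_singleton_self m) hu
      exact hM.ne_top this
    have key : ∀ n : ℕ, ∀ x ∈ P, ∃ y ∈ P, x = m ^ (n + 1) * y := by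
      intro n
      induction n with
      | zero =>
        intro x hx
        have : x ∈ Ideal.span {m} := by rw [← Ideal.submodule_span_eq, ← hm]; exact hPM hx
        obtain ⟨y, hy⟩ := Ideal.mem_span_singleton'.mp this
        have hyP : y ∈ P := by
          rcases hP.mem_or_mem (show m * y ∈ P by rw [mul_comm, hy]; exact hx) with h | h
          · exact absurd h hmP
          · exact h
        exact ⟨y, hyP, by rw [pow_one, mul_comm, hy]⟩
      | succ n ih =>
        intro x hx
        obtain ⟨y, hyP, hy⟩ := ih x hx
        have : y ∈ Ideal.span {m} := by rw [← Ideal.submodule_span_eq, ← hm]; exact hPM hyP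
        obtain ⟨z, hz⟩ := Ideal.mem_span_singleton'.mp this
        have hzP : z ∈ P := by
          rcases hP.mem_or_mem (show m * z ∈ P by rw [mul_comm, hz]; exact hyP) with h | h
          · exact absurd h hmP
          · exact h
        exact ⟨z, hzP, by rw [hy, ← hz, pow_succ]; ring⟩
    have hPbot : P = ⊥ := by
      apply le_antisymm _ bot_le
      rw [← arch m hmunit]
      apply le_iInf
      intro n x hx
      obtain ⟨y, _, hy⟩ := key n x hx
      exact Ideal.mem_span_singleton'.mpr ⟨y, by rw [mul_comm, hy]⟩
    rw [hPbot]
    exact bot_isPrincipal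
end

section
/- If R is an integral domain such that R_M is Archimedean for every maximal ideal M, and every maximal ideal of R is invertible, then R is a Dedekind domain. -/
/-!
If `M * M⁻¹ = 1`, some `a ∈ M` and `b ∈ M⁻¹` have `c = a * b ∉ M`; then `c * M ⊆ (a)` with `c`
a unit of `R_M`, so the maximal ideal of `R_M` is generated by `a`. In a local domain whose
maximal ideal is `(t)`, the Archimedean property makes the multiplicity of `t` in any `x ≠ 0`
finite, and the cofactor is a unit, so each `R_M` is a discrete valuation ring. Hence `R` has
dimension at most one and is integrally closed (both properties are local), every nonzero prime is
maximal, hence invertible, hence finitely generated, and `R` is Noetherian by Cohen's theorem.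
-/

open Ideal IsLocalRing FractionalIdeal nonZeroDivisors

def Ring.IsArchimedean (S : Type*) [CommRing S] : Prop :=
  ∀ r : S, ¬IsUnit r → (⨅ n : ℕ, span {r ^ (n + 1)}) = ⊥

theorem Ideal.exists_dvd_mul_of_mul_inv_eq_one {R K : Type*} [CommRing R] [IsDomain R]
    [Field K] [Algebra R K] [IsFractionRing R K] {M : Ideal R} (hM : M ≠ ⊤)
    (h : (M : FractionalIdeal R⁰ K) * (M : FractionalIdeal R⁰ K)⁻¹ = 1) :
    ∃ a ∈ M, a ≠ 0 ∧ ∃ c ∉ M, ∀ x ∈ M, a ∣ c * x := by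
  set I := (M : FractionalIdeal R⁰ K)
  have hI0 : I ≠ 0 := by
    rintro hI
    rw [hI, zero_mul] at h
    exact zero_ne_one h
  obtain ⟨a', ha', b, hb, hab⟩ : ∃ a' ∈ I, ∃ b ∈ I⁻¹, a' * b ∉ I := by
    by_contra! hle
    have : (1 : FractionalIdeal R⁰ K) ≤ I := h ▸ FractionalIdeal.mul_le.mpr hle
    rw [← coeIdeal_top, coeIdeal_le_coeIdeal, top_le_iff] at this
    exact hM this
  obtain ⟨a, haM, rfl⟩ := (mem_coeIdeal _).mp ha'
  have hab1 : algebraMap R K a * b ∈ (1 : FractionalIdeal R⁰ K) :=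
    h ▸ FractionalIdeal.mul_mem_mul ha' hb
  obtain ⟨c, hc⟩ := (mem_one_iff _).mp hab1
  refine ⟨a, haM, ?_, c, fun hcM => hab (hc ▸ (mem_coeIdeal _).mpr ⟨c, hcM, rfl⟩), fun x hx => ?_⟩
  · rintro rfl
    apply hab
    simpa using zero_mem I
  · obtain ⟨d, hd⟩ := (mem_one_iff _).mp
      ((mem_inv_iff hI0).mp hb _ ((mem_coeIdeal _).mpr ⟨x, hx, rfl⟩))
    refine ⟨d, IsFractionRing.injective R K ?_⟩
    rw [map_mul, map_mul, hd, hc, mul_assoc]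

theorem Localization.AtPrime.maximalIdeal_eq_span_of_dvd_mul {R : Type*} [CommRing R]
    {M : Ideal R} [M.IsPrime] {a c : R} (ha : a ∈ M) (hc : c ∉ M) (h : ∀ x ∈ M, a ∣ c * x) :
    maximalIdeal (Localization.AtPrime M) = span {algebraMap R _ a} := by
  have hcu : IsUnit (algebraMap R (Localization.AtPrime M) c) :=
    IsLocalization.map_units _ (⟨c, hc⟩ : M.primeCompl)
  rw [← Localization.AtPrime.map_eq_maximalIdeal]
  refine le_antisymm (map_le_iff_le_comap.mpr fun x hx => ?_)
    ((span_singleton_le_iff_mem _).mpr (mem_map_of_mem _ ha))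
  rw [mem_comap, mem_span_singleton, ← hcu.dvd_mul_left, ← map_mul]
  exact map_dvd _ (h x hx)

theorem IsLocalRing.hasUnitMulPowIrreducibleFactorization_of_maximalIdeal_eq_span {S : Type*}
    [CommRing S] [IsDomain S] [IsLocalRing S] {t : S} (ht0 : t ≠ 0)
    (ht : maximalIdeal S = span {t}) (harch : (⨅ n : ℕ, span {t ^ (n + 1)}) = ⊥) :
    IsDiscreteValuationRing.HasUnitMulPowIrreducibleFactorization S := by
  refine ⟨t, IsDiscreteValuationRing.irreducible_of_span_eq_maximalIdeal t ht0 ht,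
    fun {x} hx => ?_⟩
  have hfin : FiniteMultiplicity t x := by
    by_contra hinf
    have hxmem : x ∈ ⨅ n : ℕ, span {t ^ (n + 1)} := mem_iInf.mpr fun n =>
      mem_span_singleton.mpr (FiniteMultiplicity.not_iff_forall.mp hinf (n + 1))
    rw [harch, mem_bot] at hxmem
    exact hx hxmem
  obtain ⟨u, hxu, htu⟩ := hfin.exists_eq_pow_mul_and_not_dvd
  have hu : IsUnit u := by
    by_contra hu
    exact htu (mem_span_singleton.mp (ht ▸ (mem_maximalIdeal u).mpr hu))
  exact ⟨multiplicity t x, hu.unit, hxu.symm⟩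

theorem Ideal.IsMaximal.isDiscreteValuationRing_localization {R K : Type*} [CommRing R]
    [IsDomain R] [Field K] [Algebra R K] [IsFractionRing R K] {M : Ideal R} [hM : M.IsMaximal]
    (hinv : (M : FractionalIdeal R⁰ K) * (M : FractionalIdeal R⁰ K)⁻¹ = 1)
    (harch : Ring.IsArchimedean (Localization.AtPrime M)) :
    IsDiscreteValuationRing (Localization.AtPrime M) := by
  obtain ⟨a, haM, ha0, c, hcM, hdvd⟩ := exists_dvd_mul_of_mul_inv_eq_one hM.ne_top hinv
  have ht := Localization.AtPrime.maximalIdeal_eq_span_of_dvd_mul haM hcM hdvd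
  have htu : ¬IsUnit (algebraMap R (Localization.AtPrime M) a) :=
    (mem_maximalIdeal _).mp (ht ▸ mem_span_singleton_self _)
  have ht0 : algebraMap R (Localization.AtPrime M) a ≠ 0 :=
    (map_ne_zero_iff _ (IsLocalization.injective _ M.primeCompl_le_nonZeroDivisors)).mpr ha0
  exact .ofHasUnitMulPowIrreducibleFactorization
    (hasUnitMulPowIrreducibleFactorization_of_maximalIdeal_eq_span ht0 ht (harch _ htu))

theorem stmt_5 {R : Type*} [CommRing R] [IsDomain R]
    (hloc : ∀ (M : Ideal R) (hM : M.IsMaximal),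
      ∀ r : @Localization.AtPrime R _ M hM.isPrime, ¬IsUnit r →
        (⨅ n : ℕ, Ideal.span {r ^ (n + 1)}) = ⊥)
    (hinv : ∀ M : Ideal R, M.IsMaximal →
      (M : FractionalIdeal (nonZeroDivisors R) (FractionRing R)) *
        (M : FractionalIdeal (nonZeroDivisors R) (FractionRing R))⁻¹ = 1) :
    IsDedekindDomain R := by
  have hdvr (M : Ideal R) [hM : M.IsMaximal] : IsDiscreteValuationRing (Localization.AtPrime M) :=
    hM.isDiscreteValuationRing_localization (hinv M hM) (hloc M hM)
  have : Ring.KrullDimLE 1 R :=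
    Ring.krullDimLE_of_isLocalization_maximal (fun M _ => Localization.AtPrime M) fun M _ =>
      have := hdvr M; inferInstance
  have : Ring.DimensionLEOne R := ⟨fun hP0 hP => hP.isMaximal_of_ne_bot hP0⟩
  have : IsNoetherianRing R := .of_prime_ne_bot fun P hP hP0 =>
    fg_of_isUnit (IsFractionRing.injective R (FractionRing R)) P
      ((mul_inv_cancel_iff_isUnit _).mp (hinv P (hP.isMaximal hP0)))
  have : IsIntegrallyClosed R := .of_localization_maximal fun M _ _ =>
    have := hdvr M; inferInstance
  exact { }
end

section
/- An integral domain R is Archimedean if and only if for each nonzero nonunit r of R there exists an Archimedean overring D of R (a ring between R and Frac(R)) in which r is a nonunit. -/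
lemma archi_iff {A : Type*} [CommRing A] (d : A) :
    (⨅ n : ℕ, Ideal.span {d ^ (n + 1)}) = ⊥ ↔
      ∀ x : A, (∀ n : ℕ, d ^ (n + 1) ∣ x) → x = 0 := by
  rw [Submodule.eq_bot_iff]
  constructor
  · intro h x hx
    exact h x (by simpa [Ideal.mem_iInf, Ideal.mem_span_singleton] using hx)
  · intro h x hx
    exact h x (by simpa [Ideal.mem_iInf, Ideal.mem_span_singleton] using hx)

theorem stmt_6 {R : Type*} [CommRing R] [IsDomain R] :
    (∀ r : R, ¬IsUnit r → (⨅ n : ℕ, Ideal.span {r ^ (n + 1)}) = ⊥) ↔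
      ∀ r : R, r ≠ 0 → ¬IsUnit r →
        ∃ D : Subalgebra R (FractionRing R),
          (∀ d : D, ¬IsUnit d → (⨅ n : ℕ, Ideal.span {d ^ (n + 1)}) = ⊥) ∧
          ¬IsUnit (⟨algebraMap R (FractionRing R) r, D.algebraMap_mem r⟩ : D) := by
  have hinj : Function.Injective (algebraMap R (FractionRing R)) :=
    IsFractionRing.injective R (FractionRing R)
  constructor
  · intro hR r _ hr
    refine ⟨⊥, ?_, ?_⟩
    · let e : (⊥ : Subalgebra R (FractionRing R)) ≃ₐ[R] R :=
        Algebra.botEquivOfInjective hinj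
      intro d hd
      rw [archi_iff]
      intro x hx
      have hed : ¬ IsUnit (e d) := fun h => hd (by simpa using h.map e.symm)
      have := (archi_iff (e d)).mp (hR (e d) hed) (e x)
        (fun n => by simpa using (e : (⊥ : Subalgebra R (FractionRing R)) →+* R).map_dvd (hx n))
      exact e.injective (by simpa using this)
    · intro h
      let e : (⊥ : Subalgebra R (FractionRing R)) ≃ₐ[R] R :=
        Algebra.botEquivOfInjective hinj
      have : (⟨algebraMap R (FractionRing R) r, Subalgebra.algebraMap_mem ⊥ r⟩ :
          (⊥ : Subalgebra R (FractionRing R))) = algebraMap R _ r := rfl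
      rw [this] at h
      have := h.map e
      rw [e.commutes] at this
      exact hr this
  · intro h r hr
    by_cases hr0 : r = 0
    · subst hr0
      simp [zero_pow]
    · obtain ⟨D, hD, hrD⟩ := h r hr0 hr
      have hDinj : Function.Injective (algebraMap R D) := by
        intro x y hxy
        exact hinj (congrArg Subtype.val hxy)
      rw [archi_iff]
      intro x hx
      have hfr : algebraMap R D r =
          (⟨algebraMap R (FractionRing R) r, D.algebraMap_mem r⟩ : D) := rfl
      have := (archi_iff (algebraMap R D r)).mp
        (by rw [hfr]; exact hD _ hrD) (algebraMap R D x)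
        (fun n => by simpa using (algebraMap R D).map_dvd (hx n))
      exact hDinj (this.trans (map_zero _).symm)
end

section
/- An intersection of a family of Archimedean integral domains with a common field of fractions is Archimedean; in particular, a locally Archimedean domain (one with R_M Archimedean for every maximal ideal M) is Archimedean. -/
/-- If the image of `x` under a ring hom into an "Archimedean" situation vanishes
because it lies in all powers, then under injectivity `x = 0`. -/
lemma arch_transfer {A B : Type*} [CommRing A] [CommRing B] (φ : A →+* B)
    (hφ : Function.Injective φ) (r : A)
    (harch : (⨅ n : ℕ, Ideal.span {φ r ^ (n + 1)}) = ⊥) :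
    (⨅ n : ℕ, Ideal.span {r ^ (n + 1)}) = ⊥ := by
  refine (eq_bot_iff).2 fun x hx => ?_
  rw [Ideal.mem_iInf] at hx
  have : φ x ∈ (⨅ n : ℕ, Ideal.span {φ r ^ (n + 1)}) := by
    rw [Ideal.mem_iInf]
    intro n
    rw [Ideal.mem_span_singleton]
    have := (Ideal.mem_span_singleton).1 (hx n)
    simpa [map_pow] using map_dvd φ this
  rw [harch, Ideal.mem_bot] at this
  rw [Ideal.mem_bot]
  exact hφ (by simpa using this)

/-- An intersection of a family of Archimedean domains (subrings of a common field `K`)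
is Archimedean; in particular a locally Archimedean domain is Archimedean. -/
theorem stmt_7 (K : Type*) [Field K] (ι : Type*) (R : ι → Subring K)
    (arch : ∀ i, ∀ r : R i, ¬IsUnit r → (⨅ n : ℕ, Ideal.span {r ^ (n + 1)}) = ⊥)
    (S : Type*) [CommRing S] [IsDomain S]
    (hloc : ∀ (M : Ideal S) (hM : M.IsMaximal),
      ∀ r : @Localization.AtPrime S _ M hM.isPrime, ¬IsUnit r →
        (⨅ n : ℕ, Ideal.span {r ^ (n + 1)}) = ⊥) :
    (∀ r : (⨅ i, R i : Subring K), ¬IsUnit r →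
        (⨅ n : ℕ, Ideal.span {r ^ (n + 1)}) = ⊥) ∧
    (∀ r : S, ¬IsUnit r → (⨅ n : ℕ, Ideal.span {r ^ (n + 1)}) = ⊥) := by
  constructor
  · intro r hr
    by_cases hr0 : (r : K) = 0
    · have hz : r = 0 := Subtype.ext hr0
      subst hz
      refine le_antisymm (le_trans (iInf_le _ 0) ?_) bot_le
      simp [Ideal.span_singleton_eq_bot]
    · have hex : ∃ i, ¬ IsUnit (Subring.inclusion (iInf_le R i) r) := by
        by_contra h
        push_neg at h
        apply hr
        rw [isUnit_iff_exists_inv]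
        have hmem : (r : K)⁻¹ ∈ ⨅ i, R i := by
          rw [Subring.mem_iInf]
          intro i
          obtain ⟨b, hb⟩ := isUnit_iff_exists_inv.1 (h i)
          have hb' : (r : K) * (b : K) = 1 := by
            have := congrArg (fun z : R i => (z : K)) hb
            push_cast at this
            simpa using this
          have : (r : K)⁻¹ = (b : K) := inv_eq_of_mul_eq_one_right hb'
          rw [this]
          exact b.2
        refine ⟨⟨(r : K)⁻¹, hmem⟩, ?_⟩
        ext
        push_cast
        exact mul_inv_cancel₀ hr0
      obtain ⟨i, hi⟩ := hex
      have hinj : Function.Injective (Subring.inclusion (iInf_le R i)) := by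
        intro a b hab
        have h2 := congrArg Subtype.val hab
        exact Subtype.ext h2
      exact arch_transfer (Subring.inclusion (iInf_le R i)) hinj r (arch i _ hi)
  · intro r hr
    obtain ⟨M, hM, hrM⟩ := exists_max_ideal_of_mem_nonunits hr
    haveI := hM.isPrime
    let L := Localization.AtPrime M
    have hinj : Function.Injective (algebraMap S L) :=
      IsLocalization.injective (M := M.primeCompl) L
        (fun x hx => mem_nonZeroDivisors_of_ne_zero (fun h0 => hx (h0 ▸ M.zero_mem)))
    have hnu : ¬ IsUnit (algebraMap S L r) := by
      intro hu
      exact ((IsLocalization.AtPrime.isUnit_to_map_iff L M r).1 hu) hrM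
    exact arch_transfer (algebraMap S L) hinj r (hloc M hM _ hnu)
end

section
/- Let A ⊆ B be an extension of integral domains. If every nonzero nonunit of A belongs to a height-one prime ideal of B, then A is Archimedean. -/
theorem stmt_8 {A B : Type*} [CommRing A] [IsDomain A] [CommRing B] [IsDomain B]
    [Algebra A B] (hinj : Function.Injective (algebraMap A B))
    (h : ∀ a : A, a ≠ 0 → ¬IsUnit a →
      ∃ P : Ideal B, P.IsPrime ∧ P ≠ ⊥ ∧
        (∀ Q : Ideal B, Q.IsPrime → Q < P → Q = ⊥) ∧ algebraMap A B a ∈ P) :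
    ∀ a : A, ¬IsUnit a → (⨅ n : ℕ, Ideal.span {a ^ (n + 1)}) = ⊥ := by
  intro a hau
  rw [eq_bot_iff]
  intro x hx
  simp only [Ideal.mem_iInf] at hx
  rw [Ideal.mem_bot]
  by_contra hx0
  rcases eq_or_ne a 0 with rfl | ha0
  · have := hx 0
    simp [Ideal.mem_span_singleton, zero_dvd_iff] at this
    exact hx0 this
  obtain ⟨P, hP, hPbot, hmin, hbP⟩ := h a ha0 hau
  set b : B := algebraMap A B a with hb
  have hb0 : b ≠ 0 := fun hh => ha0 (hinj (by simpa using hh))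
  set x' : B := algebraMap A B x with hx'
  have hx'0 : x' ≠ 0 := fun hh => hx0 (hinj (by simpa using hh))
  have hdvd : ∀ n : ℕ, b ^ (n + 1) ∣ x' := by
    intro n
    have := hx n
    rw [Ideal.mem_span_singleton] at this
    simpa [hb, hx', map_pow] using map_dvd (algebraMap A B) this
  -- multiplicative set S = { s * b^n : s ∉ P }
  let S : Submonoid B :=
    { carrier := {z | ∃ s ∉ P, ∃ n : ℕ, z = s * b ^ n}
      mul_mem' := by
        rintro z w ⟨s, hs, n, rfl⟩ ⟨t, ht, m, rfl⟩
        exact ⟨s * t, fun hst => ((hP.mem_or_mem hst).elim hs ht),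
          n + m, by ring⟩
      one_mem' := ⟨1, hP.1 ∘ (Ideal.eq_top_iff_one P).mpr, 0, by ring⟩ }
  have hdisj : Disjoint ((Ideal.span {x'} : Ideal B) : Set B) (S : Set B) := by
    rw [Set.disjoint_left]
    rintro z hz ⟨s, hs, n, rfl⟩
    rw [SetLike.mem_coe, Ideal.mem_span_singleton] at hz
    obtain ⟨t, ht⟩ := hz
    obtain ⟨y, hy⟩ := hdvd n
    have : b ^ n * s = b ^ n * (b * (y * t)) := by
      linear_combination ht + t * hy
    have hsbt : s = b * (y * t) := mul_left_cancel₀ (pow_ne_zero n hb0) this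
    exact hs (hsbt ▸ P.mul_mem_right _ hbP)
  obtain ⟨Q, hQ, hxQ, hQdisj⟩ := Ideal.exists_le_prime_disjoint _ S hdisj
  have hQP : Q ≤ P := by
    intro t htQ
    by_contra htP
    exact Set.disjoint_left.mp hQdisj htQ ⟨t, htP, 0, by ring⟩
  have hbQ : b ∉ Q := fun hh =>
    Set.disjoint_left.mp hQdisj hh ⟨1, hP.1 ∘ (Ideal.eq_top_iff_one P).mpr, 1, by ring⟩
  have hQltP : Q < P := lt_of_le_of_ne hQP (fun hh => hbQ (hh ▸ hbP))
  have : Q = ⊥ := hmin Q hQ hQltP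
  exact hx'0 (by simpa [this, Ideal.mem_bot] using hxQ (Ideal.mem_span_singleton_self x'))
end

section
/- Let (R, M) be a local integral domain. If some integral extension ring of R has a maximal ideal of height one, then R is Archimedean. -/
theorem stmt_9 {R D : Type*} [CommRing R] [IsDomain R] [IsLocalRing R]
    [CommRing D] [IsDomain D] [Algebra R D]
    (hinj : Function.Injective (algebraMap R D)) [Algebra.IsIntegral R D]
    (h : ∃ N : Ideal D, N.IsMaximal ∧ N ≠ ⊥ ∧
      ∀ Q : Ideal D, Q.IsPrime → Q < N → Q = ⊥) :
    ∀ r : R, ¬IsUnit r → (⨅ n : ℕ, Ideal.span {r ^ (n + 1)}) = ⊥ := by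
  obtain ⟨N, hNmax, hNbot, hN⟩ := h
  intro r hr
  rcases eq_or_ne r 0 with rfl | hr0
  · refine le_antisymm (le_trans (iInf_le _ 0) ?_) bot_le
    simp
  -- r ∈ comap N
  have hcomap : (N.comap (algebraMap R D)).IsMaximal :=
    Ideal.isMaximal_comap_of_isIntegral_of_isMaximal N
  have hrM : algebraMap R D r ∈ N := by
    have : N.comap (algebraMap R D) = IsLocalRing.maximalIdeal R :=
      IsLocalRing.eq_maximalIdeal hcomap
    have : r ∈ N.comap (algebraMap R D) := by
      rw [this]; exact (IsLocalRing.mem_maximalIdeal r).mpr hr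
    exact this
  set ρ : D := algebraMap R D r with hρ
  have hρ0 : ρ ≠ 0 := fun hc => hr0 (hinj (by simpa using hc))
  refine le_antisymm ?_ bot_le
  intro a ha
  rw [Ideal.mem_bot]
  by_contra ha0
  set b : D := algebraMap R D a with hb
  have hb0 : b ≠ 0 := fun hc => ha0 (hinj (by simpa using hc))
  -- b is divisible by every power of ρ
  have hdiv : ∀ n : ℕ, ∃ c : D, b = ρ ^ (n + 1) * c := by
    intro n
    have := Ideal.mem_iInf.mp ha n
    obtain ⟨c, hc⟩ := Ideal.mem_span_singleton'.mp this
    exact ⟨algebraMap R D c, by rw [hb, ← hc]; push_cast [map_mul, map_pow]; ring⟩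
  -- the submonoid of elements ρ^n * s with s ∉ N
  let S : Submonoid D :=
    { carrier := {x | ∃ n : ℕ, ∃ s : D, s ∉ N ∧ x = ρ ^ n * s}
      mul_mem' := by
        rintro x y ⟨n, s, hs, rfl⟩ ⟨m, t, ht, rfl⟩
        refine ⟨n + m, s * t, fun hst => ?_, by ring⟩
        rcases (hNmax.isPrime.mem_or_mem hst) with h' | h' <;> [exact hs h'; exact ht h']
      one_mem' := ⟨0, 1, fun h1 => hNmax.ne_top (Ideal.eq_top_iff_one N |>.mpr h1),
        by ring⟩ }
  have hdisj : Disjoint ((Ideal.span {b} : Ideal D) : Set D) (S : Set D) := by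
    rw [Set.disjoint_left]
    rintro x hx ⟨n, s, hs, hxs⟩
    obtain ⟨d, hd⟩ := Ideal.mem_span_singleton'.mp hx
    obtain ⟨c, hc⟩ := hdiv n
    -- x = d * b = d * ρ^(n+1) * c  and x = ρ^n * s
    have hkey : ρ ^ n * s = ρ ^ n * (ρ * (d * c)) := by
      rw [← hxs, ← hd, hc]; ring
    have hsc : s = ρ * (d * c) := by
      have := mul_left_cancel₀ (pow_ne_zero n hρ0) hkey
      exact this
    exact hs (hsc ▸ N.mul_mem_right _ hrM)
  obtain ⟨Q, hQprime, hbQ, hQdisj⟩ := Ideal.exists_le_prime_disjoint _ S hdisj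
  have hQN : Q ≤ N := by
    intro y hy
    by_contra hyN
    exact Set.disjoint_left.mp hQdisj hy ⟨0, y, hyN, by ring⟩
  have hρQ : ρ ∉ Q := fun hc =>
    Set.disjoint_left.mp hQdisj hc ⟨1, 1, fun h1 => hNmax.ne_top (Ideal.eq_top_iff_one N |>.mpr h1), by ring⟩
  have hQltN : Q < N := lt_of_le_of_ne hQN (fun hc => hρQ (hc ▸ hrM))
  have : Q = ⊥ := hN Q hQprime hQltN
  have : b ∈ (⊥ : Ideal D) := this ▸ hbQ (Ideal.mem_span_singleton_self b)
  exact hb0 (Ideal.mem_bot.mp this)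
end

section
/- Let R be an integral domain of finite character such that ⋂_{n≥1} M^n = (0) for every maximal ideal M of R. Then R satisfies the ascending chain condition on principal ideals. -/
lemma prod_mem_pow_card {R : Type*} [CommRing R] (M : Ideal R) (c : ℕ → R)
    (t : Finset ℕ) (hc : ∀ i ∈ t, c i ∈ M) : (∏ i ∈ t, c i) ∈ M ^ t.card := by
  classical
  induction t using Finset.induction with
  | empty => simp
  | @insert a s ha ih =>
    rw [Finset.prod_insert ha, Finset.card_insert_of_notMem ha, pow_succ, mul_comm]
    exact Ideal.mul_mem_mul (hc a (Finset.mem_insert_self a s))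
      (ih fun i hi => hc i (Finset.mem_insert_of_mem hi))

theorem stmt_11 {R : Type*} [CommRing R] [IsDomain R]
    (hfc : ∀ r : R, r ≠ 0 → {M : Ideal R | M.IsMaximal ∧ r ∈ M}.Finite)
    (h : ∀ M : Ideal R, M.IsMaximal → (⨅ n : ℕ, M ^ (n + 1)) = ⊥) :
    ∀ f : ℕ → Ideal R, (∀ n, (f n).IsPrincipal) → Monotone f →
      ∃ N, ∀ n, N ≤ n → f n = f N := by
  intro f hprin hmono
  by_contra hcon
  push_neg at hcon
  choose nxt hnxt1 hnxt2 using hcon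
  set φ : ℕ → ℕ := fun k => nxt^[k] 0 with hφdef
  have hφ : ∀ k, f (φ k) < f (φ (k + 1)) := by
    intro k
    have hiter : φ (k + 1) = nxt (φ k) := Function.iterate_succ_apply' nxt k 0
    rw [hiter]
    exact lt_of_le_of_ne (hmono (hnxt1 (φ k))) (hnxt2 (φ k)).symm
  -- generators of the strictly increasing chain (shifted by one)
  choose b hb using fun k => (hprin (φ (k + 1))).principal
  have hbne : ∀ k, b k ≠ 0 := by
    intro k hk
    have h1 : (⊥ : Ideal R) < f (φ (k + 1)) := bot_le.trans_lt (hφ k)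
    rw [hb k] at h1
    exact h1.ne' (Ideal.span_singleton_eq_bot.mpr hk)
  have hd : ∀ k, DvdNotUnit (b (k + 1)) (b k) := by
    intro k
    have h1 : f (φ (k + 1)) < f (φ (k + 2)) := hφ (k + 1)
    rw [hb k, hb (k + 1)] at h1
    exact Ideal.span_singleton_lt_span_singleton.mp h1
  choose c hcu hcb using fun k => (hd k).2
  -- product formula
  have hr : ∀ n, b 0 = b n * ∏ i ∈ Finset.range n, c i := by
    intro n
    induction n with
    | zero => simp
    | succ n ih =>
      rw [ih, hcb n, Finset.prod_range_succ]
      ring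
  -- maximal ideals containing each c i
  have hc_netop : ∀ i, Ideal.span {c i} ≠ (⊤ : Ideal R) := by
    intro i hi
    exact hcu i (Ideal.span_singleton_eq_top.mp hi)
  choose Mi hMimax hMile using fun i => Ideal.exists_le_maximal _ (hc_netop i)
  have hci : ∀ i, c i ∈ Mi i := fun i => hMile i (Ideal.mem_span_singleton_self _)
  have hrMi : ∀ i, b 0 ∈ Mi i := by
    intro i
    have := hr (i + 1)
    rw [this]
    have : c i ∣ ∏ j ∈ Finset.range (i + 1), c j :=
      Finset.dvd_prod_of_mem c (Finset.mem_range.mpr (Nat.lt_succ_self i))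
    obtain ⟨x, hx⟩ := this
    rw [hx, mul_comm (c i) x, ← mul_assoc]
    exact Ideal.mul_mem_left _ _ (hci i)
  -- pigeonhole: some maximal ideal occurs infinitely often
  have hS : {M : Ideal R | M.IsMaximal ∧ b 0 ∈ M}.Finite := hfc (b 0) (hbne 0)
  haveI : Finite ↥{M : Ideal R | M.IsMaximal ∧ b 0 ∈ M} := hS.to_subtype
  set F : ℕ → ↥{M : Ideal R | M.IsMaximal ∧ b 0 ∈ M} :=
    fun i => ⟨Mi i, hMimax i, hrMi i⟩ with hFdef
  obtain ⟨y, hy⟩ := Finite.exists_infinite_fiber F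
  obtain ⟨Mmax, hMmaxmax, hTinf⟩ :
      ∃ M : Ideal R, M.IsMaximal ∧ {i : ℕ | Mi i = M}.Infinite := by
    refine ⟨(y : Ideal R), y.2.1, ?_⟩
    have hsub : F ⁻¹' {y} ⊆ {i : ℕ | Mi i = (y : Ideal R)} := by
      intro i hi
      simp only [Set.mem_preimage, Set.mem_singleton_iff] at hi
      exact congrArg Subtype.val hi
    exact Set.Infinite.mono hsub (Set.infinite_coe_iff.mp hy)
  have hmem : ∀ k : ℕ, b 0 ∈ Mmax ^ (k + 1) := by
    intro k
    obtain ⟨t, htT, htcard⟩ := hTinf.exists_subset_card_eq (k + 1)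
    have htsub : t ⊆ Finset.range (t.sup id + 1) := by
      intro i hi
      exact Finset.mem_range.mpr (Nat.lt_succ_of_le (Finset.le_sup (f := id) hi))
    have hsplit : (∏ i ∈ Finset.range (t.sup id + 1) \ t, c i) * ∏ i ∈ t, c i =
        ∏ i ∈ Finset.range (t.sup id + 1), c i := Finset.prod_sdiff htsub
    have hp : (∏ i ∈ t, c i) ∈ Mmax ^ (k + 1) := by
      rw [← htcard]
      exact prod_mem_pow_card _ c t fun i hi => (htT hi) ▸ hci i
    have heq : b 0 = (b (t.sup id + 1) * ∏ i ∈ Finset.range (t.sup id + 1) \ t, c i)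
        * ∏ i ∈ t, c i := by
      rw [hr (t.sup id + 1), ← hsplit]; ring
    rw [heq]
    exact Ideal.mul_mem_left _ _ hp
  have hbot : b 0 ∈ (⨅ n : ℕ, Mmax ^ (n + 1)) := by
    rw [Submodule.mem_iInf]
    exact hmem
  rw [h _ hMmaxmax] at hbot
  exact hbne 0 (Submodule.mem_bot R |>.mp hbot)
end

section
/- Let I be a stable ideal of an integral domain R, i.e., I is invertible as an ideal of the overring E = (I : I) = {x ∈ Frac(R) : xI ⊆ I}. Then the divisorial closure I_v = (R : (R : I)) satisfies I_v = I·(I_v : I_v), I_v is a stable ideal, and (I_v)^2 ⊆ I. -/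
/-!
Let `E = (J : J)` and `T = (J : J²)`, so that `J T = E`. For every `E`-module `B`, division by `J`
is multiplication by `T` and division by `T` is multiplication by `J`. Applied to `B = (R : E)` this
gives `(R : J) = (R : E) T`, and then, with `G = (R : (R : E))`, `J_v = G J`. The fractional ideal
`G` is a ring containing `E`, and `J_v` is invertible in it with inverse `T G`; hence
`(J_v : J_v) = G`, `J_v` is stable, and `J_v² = J J_v ⊆ J` because `J_v ⊆ R`.
-/

open scoped nonZeroDivisors

namespace FractionalIdeal

instance {R P : Type*} [CommRing R] [CommRing P] [NoZeroDivisors P] [Algebra R P]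
    {S : Submonoid R} : NoZeroDivisors (FractionalIdeal S P) where
  eq_zero_or_eq_zero_of_mul_eq_zero {A B} hAB := by
    simp only [eq_zero_iff] at hAB ⊢
    by_contra! h
    obtain ⟨⟨a, ha, ha0⟩, ⟨b, hb, hb0⟩⟩ := h
    exact mul_ne_zero ha0 hb0 (hAB _ (mul_mem_mul ha hb))

variable {R K : Type*} [CommRing R] [Field K] [Algebra R K] {A B C E M : FractionalIdeal R⁰ K}

lemma ne_zero_of_one_le (hA : 1 ≤ A) : A ≠ 0 := by
  rintro rfl
  exact one_ne_zero (le_bot_iff.mp hA)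

variable [IsDomain R] [IsFractionRing R K]

def IsStable (A : FractionalIdeal R⁰ K) : Prop :=
  A * (A / (A * A)) = A / A

lemma one_le_div_self (hA : A ≠ 0) : 1 ≤ A / A :=
  (le_div_iff_mul_le hA).mpr (one_mul A).le

lemma div_self_mul_self (hA : A ≠ 0) : A / A * A = A :=
  le_antisymm ((le_div_iff_mul_le hA).mp le_rfl) (le_mul_of_one_le_left' (one_le_div_self hA))

lemma div_self_mul_div_self (hA : A ≠ 0) : A / A * (A / A) = A / A := by
  refine le_antisymm ((le_div_iff_mul_le hA).mpr ?_) (le_mul_of_one_le_right' (one_le_div_self hA))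
  rw [mul_assoc, div_self_mul_self hA, div_self_mul_self hA]

lemma one_le_one_div (hA : A ≠ 0) (hA1 : A ≤ 1) : 1 ≤ 1 / A :=
  (le_div_iff_mul_le hA).mpr (by rwa [one_mul])

lemma one_div_le_one (hA : 1 ≤ A) : 1 / A ≤ 1 :=
  (le_mul_of_one_le_left' hA).trans mul_one_div_le_one

lemma div_div_eq_div_mul : B / A / C = B / (A * C) := by
  rcases eq_or_ne C 0 with rfl | hC
  · simp
  rcases eq_or_ne A 0 with rfl | hA
  · rw [zero_mul, div_zero]
    exact (mul_eq_zero.mp (nonpos_iff_eq_zero.mp ((le_div_iff_mul_le hC).mp le_rfl))).resolve_right hC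
  exact eq_of_forall_le_iff fun X => by
    rw [le_div_iff_mul_le hC, le_div_iff_mul_le hA, le_div_iff_mul_le (mul_ne_zero hA hC),
      mul_assoc, mul_comm C]

lemma le_one_div_one_div (hA : 1 / A ≠ 0) : A ≤ 1 / (1 / A) :=
  (le_div_iff_mul_le hA).mpr mul_one_div_le_one

/-- Here and below, `1 ≤ E` with `M * E = M` encodes that `M` is a module over the overring `E`. -/
lemma div_mul_eq_div_of_mul_eq_self (hE : 1 ≤ E) (hM : M * E = M) : B / M * E = B / M := by
  rcases eq_or_ne M 0 with rfl | hM0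
  · rw [div_zero, zero_mul]
  refine le_antisymm ((le_div_iff_mul_le hM0).mpr ?_) (le_mul_of_one_le_right' hE)
  rw [mul_assoc, mul_comm E, hM]
  exact (le_div_iff_mul_le hM0).mp le_rfl

lemma div_eq_mul_of_mul_eq (hAC : A * C = E) (hE : 1 ≤ E) (hB : B * E = B) :
    B / A = B * C := by
  have hA : A ≠ 0 := by
    rintro rfl
    exact ne_zero_of_one_le hE (by rw [← hAC, zero_mul])
  refine le_antisymm ?_ ((le_div_iff_mul_le hA).mpr ?_)
  · calc B / A ≤ B / A * E := le_mul_of_one_le_right' hE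
      _ = B / A * A * C := by rw [← hAC, mul_assoc]
      _ ≤ B * C := mul_le_mul_left ((le_div_iff_mul_le hA).mp le_rfl) C
  · rw [mul_assoc, mul_comm C, hAC, hB]

lemma one_div_one_div_mul_self (hE : 1 ≤ E) (hEE : E * E = E) :
    1 / (1 / E) * (1 / (1 / E)) = 1 / (1 / E) := by
  rcases eq_or_ne (1 / E) 0 with hF | hF
  · rw [hF, div_zero, zero_mul]
  have hFE : 1 / E * E = 1 / E := div_mul_eq_div_of_mul_eq_self hE hEE
  have hGF : 1 / (1 / E) * (1 / E) ≤ 1 / E :=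
    (le_div_iff_mul_le (ne_zero_of_one_le hE)).mpr <| by
      rw [mul_assoc, hFE, mul_comm]
      exact mul_one_div_le_one
  have hG : 1 ≤ 1 / (1 / E) := hE.trans (le_one_div_one_div hF)
  refine le_antisymm ((le_div_iff_mul_le hF).mpr ?_) (le_mul_of_one_le_right' hG)
  rw [mul_assoc]
  exact (mul_le_mul_right hGF _).trans (mul_comm (1 / E) _ ▸ mul_one_div_le_one)

lemma div_self_eq_of_mul_eq (hAC : A * C = E) (hE : 1 ≤ E) (hAE : A * E = A) : A / A = E := by
  have hA : A ≠ 0 := by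
    rintro rfl
    exact ne_zero_of_one_le hE (by rw [← hAC, zero_mul])
  refine le_antisymm ?_ ((le_div_iff_mul_le hA).mpr (by rw [mul_comm, hAE]))
  calc A / A ≤ A / A * E := le_mul_of_one_le_right' hE
    _ = A / A * A * C := by rw [← hAC, mul_assoc]
    _ ≤ E := by rw [div_self_mul_self hA, hAC]

lemma isStable_of_mul_eq (h : A * B = A / A) : IsStable A := by
  rcases eq_or_ne A 0 with rfl | hA
  · simp [IsStable]
  have hAA : A * (A / (A * A)) ≤ A / A :=
    (le_div_iff_mul_le hA).mpr <| by
      rw [mul_comm A, mul_assoc]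
      exact (le_div_iff_mul_le (mul_ne_zero hA hA)).mp le_rfl
  have hB : B ≤ A / (A * A) :=
    (le_div_iff_mul_le (mul_ne_zero hA hA)).mpr <| by
      rw [← mul_assoc, mul_comm B, h]
      exact (le_div_iff_mul_le hA).mp le_rfl
  exact le_antisymm hAA (h ▸ mul_le_mul_right hB A)

end FractionalIdeal

open FractionalIdeal in
theorem stmt_12 {R : Type*} [CommRing R] [IsDomain R] (I : Ideal R) (hI : I ≠ ⊥)
    (J : FractionalIdeal (nonZeroDivisors R) (FractionRing R))
    (hJ : J = (I : FractionalIdeal (nonZeroDivisors R) (FractionRing R)))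
    (hstable : J * (J / (J * J)) = J / J)
    (Iv : FractionalIdeal (nonZeroDivisors R) (FractionRing R))
    (hIv : Iv = 1 / (1 / J)) :
    Iv = J * (Iv / Iv) ∧ Iv * (Iv / (Iv * Iv)) = Iv / Iv ∧ Iv * Iv ≤ J := by
  have hJ0 : J ≠ 0 := hJ ▸ coeIdeal_ne_zero.mpr hI
  set E := J / J
  set T := J / (J * J)
  have hE : 1 ≤ E := one_le_div_self hJ0
  have hJE : J * E = J := mul_comm E J ▸ div_self_mul_self hJ0
  have hFE : 1 / E * E = 1 / E := div_mul_eq_div_of_mul_eq_self hE (div_self_mul_div_self hJ0)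
  have hGE : 1 / (1 / E) * E = 1 / (1 / E) := div_mul_eq_div_of_mul_eq_self hE hFE
  have hGG := one_div_one_div_mul_self hE (div_self_mul_div_self hJ0)
  set G := 1 / (1 / E)
  have hL : 1 / J = 1 / E * T := by
    rw [← div_eq_mul_of_mul_eq hstable hE hFE, div_div_eq_div_mul, mul_comm, hJE]
  have hIvJG : Iv = J * G := by
    rw [hIv, hL, ← div_div_eq_div_mul, div_eq_mul_of_mul_eq (mul_comm T J ▸ hstable) hE hGE,
      mul_comm]
  have hJ1 : J ≤ 1 := hJ ▸ coeIdeal_le_one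
  have hJF : J ≤ 1 / E := (le_div_iff_mul_le (ne_zero_of_one_le hE)).mpr (by rwa [hJE])
  have hG : 1 ≤ G :=
    hE.trans (le_one_div_one_div fun hF => hJ0 (nonpos_iff_eq_zero.mp (hF ▸ hJF)))
  have hIvG : Iv * G = Iv := by rw [hIvJG, mul_assoc, hGG]
  have hIvInv : Iv * (T * G) = G := by
    rw [hIvJG, mul_mul_mul_comm, hstable, hGG, mul_comm, hGE]
  have hIvIv : Iv / Iv = G := div_self_eq_of_mul_eq hIvInv hG hIvG
  have hIv1 : Iv ≤ 1 := hIv ▸ one_div_le_one (one_le_one_div hJ0 hJ1)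
  refine ⟨by rw [hIvIv, hIvJG], isStable_of_mul_eq (hIvInv.trans hIvIv.symm), ?_⟩
  calc Iv * Iv = J * (Iv * G) := by nth_rewrite 1 [hIvJG]; ring
    _ = J * Iv := by rw [hIvG]
    _ ≤ J * 1 := mul_le_mul_right hIv1 J
    _ = J := mul_one J
end

section
/- A stable radical ideal of an integral domain is divisorial: if I is a nonzero radical ideal of a domain R that is invertible in its endomorphism ring (I : I), then I = (R : (R : I)). -/
/-!
Write `V = 1 / (1 / J)` for the divisorial closure of `J = I`; since `J ≤ 1`, one has `J ≤ V ≤ 1`.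
Stability says `J * L = J / J` for `L = J / (J * J) = (J / J) / J`, the would-be inverse of `J` over
the ring `J / J ≥ 1`. On the other hand `V * V * L ≤ 1` follows from `V * (1 / J) ≤ 1` alone.
Hence `V * V ≤ V * V * J * L ≤ J`, and as `I` is radical, `V ≤ J`.
-/

open nonZeroDivisors

namespace FractionalIdeal

variable {R K : Type*} [CommRing R] [Field K] [Algebra R K] [IsFractionRing R K]

theorem le_coeIdeal_of_mul_self_le {I : Ideal R} (hI : I.IsRadical) {V : FractionalIdeal R⁰ K}
    (hV : V ≤ 1) (h : V * V ≤ I) : V ≤ I := by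
  intro x hx
  obtain ⟨r, rfl⟩ := (mem_one_iff _).mp (hV hx)
  obtain ⟨s, hs, hsr⟩ := (mem_coeIdeal _).mp (h (mul_mem_mul hx hx))
  have hs_eq : s = r ^ 2 := IsFractionRing.injective R K (by rw [hsr, map_pow, sq])
  exact mem_coeIdeal_of_mem _ (hI ⟨2, hs_eq ▸ hs⟩)

variable [IsDomain R]

theorem div_mul_le (I J : FractionalIdeal R⁰ K) : I / J * J ≤ I := by
  rcases eq_or_ne J 0 with rfl | hJ
  · simp
  · exact (le_div_iff_mul_le hJ).mp le_rfl

theorem one_le_div_iff {I J : FractionalIdeal R⁰ K} (hJ : J ≠ 0) : 1 ≤ I / J ↔ J ≤ I := by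
  rw [le_div_iff_mul_le hJ, one_mul]

variable {J : FractionalIdeal R⁰ K}

theorem le_one_div_one_div_s13 (hJ : J ≠ 0) (hJ1 : J ≤ 1) : J ≤ 1 / (1 / J) := by
  have h1 : (1 : FractionalIdeal R⁰ K) ≤ 1 / J := (one_le_div_iff hJ).mpr hJ1
  rw [le_div_iff_mul_le (ne_bot_of_gt (zero_lt_one.trans_le h1))]
  exact mul_one_div_le_one

theorem one_div_one_div_le_one (hJ : J ≠ 0) (hJ1 : J ≤ 1) : 1 / (1 / J) ≤ 1 :=
  calc 1 / (1 / J) = 1 / (1 / J) * 1 := (mul_one _).symm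
    _ ≤ 1 / (1 / J) * (1 / J) := by gcongr; exact (one_le_div_iff hJ).mpr hJ1
    _ ≤ 1 := div_mul_le 1 _

theorem mul_self_one_div_one_div_le (hJ : J ≠ 0) (hJ1 : J ≤ 1)
    (hstable : J * (J / (J * J)) = J / J) : 1 / (1 / J) * (1 / (1 / J)) ≤ J := by
  set V := 1 / (1 / J)
  set L := J / (J * J)
  have hVJ : V * (1 / J) ≤ 1 := div_mul_le 1 _
  have hLJ : L * J ≤ 1 / J := by
    rw [le_div_iff_mul_le hJ, mul_assoc]
    exact (div_mul_le J _).trans hJ1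
  have hVL : V * L ≤ 1 / J := by
    rw [le_div_iff_mul_le hJ, mul_assoc]
    exact (mul_le_mul_right hLJ V).trans hVJ
  calc V * V = V * V * 1 := (mul_one _).symm
    _ ≤ V * V * (J / J) := by gcongr; exact (one_le_div_iff hJ).mpr le_rfl
    _ = J * (V * (V * L)) := by rw [← hstable]; ring
    _ ≤ J * 1 := by gcongr; exact (mul_le_mul_right hVL V).trans hVJ
    _ = J := mul_one J

end FractionalIdeal

open FractionalIdeal

theorem stmt_13 {R : Type*} [CommRing R] [IsDomain R] (I : Ideal R) (hI : I ≠ ⊥)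
    (hrad : I.IsRadical)
    (J : FractionalIdeal (nonZeroDivisors R) (FractionRing R))
    (hJ : J = (I : FractionalIdeal (nonZeroDivisors R) (FractionRing R)))
    (hstable : J * (J / (J * J)) = J / J) :
    J = 1 / (1 / J) := by
  subst hJ
  have hJ0 : (I : FractionalIdeal R⁰ (FractionRing R)) ≠ 0 := coeIdeal_ne_zero.mpr hI
  exact le_antisymm (le_one_div_one_div_s13 hJ0 coeIdeal_le_one)
    (le_coeIdeal_of_mul_self_le hrad (one_div_one_div_le_one hJ0 coeIdeal_le_one)
      (mul_self_one_div_one_div_le hJ0 coeIdeal_le_one hstable))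
end

section
/- Let R be a Mori domain and let I be a divisorial ideal of R. Then the ring (I : I) is a Mori domain. -/
/-- The image of an ideal of `A` in an `A`-algebra `K`, as an `A`-submodule of `K`. -/
def idealImage {A : Type*} (K : Type*) [CommRing A] [CommRing K] [Algebra A K]
    (J : Ideal A) : Submodule A K := Submodule.map (Algebra.linearMap A K) J

/-- `J` is a divisorial ideal with respect to the `A`-algebra `K` (which plays the role
of the fraction field of `A`): `J ≠ 0` and `J = (A : (A : J))`. -/
def IsDivisorialWrt {A : Type*} (K : Type*) [CommRing A] [CommRing K] [Algebra A K]
    (J : Ideal A) : Prop :=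
  J ≠ ⊥ ∧ idealImage K J = 1 / (1 / idealImage K J)

/-- `A` is a Mori domain, phrased via the `A`-algebra `K` playing the role of the
fraction field of `A`: every ascending chain of divisorial ideals stabilizes. -/
def IsMoriWrt (K : Type*) (A : Type*) [CommRing A] [CommRing K] [Algebra A K] : Prop :=
  ∀ f : ℕ → Ideal A, Monotone f → (∀ n, IsDivisorialWrt K (f n)) →
    ∃ N, ∀ n, N ≤ n → f n = f N

/-- The overring `(I : I)` of `R`, as a subalgebra of the fraction field. -/
noncomputable def endRing {R : Type*} [CommRing R] [IsDomain R] (I : Ideal R) :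
    Subalgebra R (FractionRing R) where
  carrier := {x | ∀ y ∈ idealImage (FractionRing R) I, x * y ∈ idealImage (FractionRing R) I}
  add_mem' := fun ha hb y hy => by rw [add_mul]; exact Submodule.add_mem _ (ha y hy) (hb y hy)
  mul_mem' := fun ha hb y hy => by rw [mul_assoc]; exact ha _ (hb y hy)
  algebraMap_mem' := fun r y hy => by rw [← Algebra.smul_def]; exact Submodule.smul_mem _ _ hy

/-! Since `I = 1 / (1 / I)`, the overring `T = (I : I) = I / I` equals `1 / ((1 / I) I)`: it is a
divisorial fractional ideal of `R`, and `a T ⊆ I ⊆ R` for any nonzero `a ∈ I`. Every divisorial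
ideal `J` of `T` satisfies `J = T / (T / J)`, which over `R` reads `J = 1 / (W (T / J))` with
`T = 1 / W`, so `a J` is a divisorial ideal of `R`. Thus `J ↦ a J` embeds chains of divisorial
ideals of `T` into chains of divisorial ideals of `R`, where they stabilize. -/

open scoped Pointwise

namespace Submodule

variable {R A : Type*} [CommSemiring R] [CommSemiring A] [Algebra R A]

theorem div_div (X Y Z : Submodule R A) : X / Y / Z = X / (Y * Z) :=
  eq_of_forall_le_iff fun P => by simp only [le_div_iff_mul_le, mul_assoc, mul_comm Z Y]

theorem div_le_div_left {Y Z : Submodule R A} (h : Y ≤ Z) (X : Submodule R A) : X / Z ≤ X / Y :=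
  fun _ hx y hy => hx y (h hy)

theorem le_one_div_one_div (N : Submodule R A) : N ≤ 1 / (1 / N) :=
  le_div_iff_mul_le.mpr mul_one_div_le_one

theorem one_div_one_div_one_div (N : Submodule R A) : 1 / (1 / (1 / N)) = 1 / N :=
  le_antisymm (div_le_div_left (le_one_div_one_div N) 1) (le_one_div_one_div _)

theorem restrictScalars_div {S : Type*} [CommSemiring S] [Algebra R S] [Algebra S A]
    [IsScalarTower R S A] (X Y : Submodule S A) :
    (X / Y).restrictScalars R = X.restrictScalars R / Y.restrictScalars R :=
  rfl

theorem smul_div {K : Type*} [Field K] [Algebra R K] {α : K} (hα : α ≠ 0)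
    (X Y : Submodule R K) : α • (X / Y) = X / (α⁻¹ • Y) := by
  ext x
  simp only [mem_smul_iff_inv_mul_mem hα, mem_div_iff_forall_mul_mem,
    mem_smul_pointwise_iff_exists]
  constructor
  · rintro h _ ⟨y, hy, rfl⟩
    simpa [smul_eq_mul, mul_left_comm, mul_assoc] using h y hy
  · intro h y hy
    simpa [smul_eq_mul, mul_left_comm, mul_assoc] using h _ ⟨y, hy, rfl⟩

end Submodule

theorem Subalgebra.restrictScalars_one_eq_toSubmodule {R K : Type*} [CommSemiring R]
    [CommSemiring K] [Algebra R K] (T : Subalgebra R K) :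
    (1 : Submodule T K).restrictScalars R = Subalgebra.toSubmodule T := by
  ext x
  simp

section IdealImage

variable {R K : Type*} [CommRing R] [CommRing K] [Algebra R K]

theorem idealImage_bot : idealImage K (⊥ : Ideal R) = ⊥ :=
  Submodule.map_bot _

theorem idealImage_le_one (J : Ideal R) : idealImage K J ≤ 1 := by
  rw [Submodule.one_eq_range]
  exact LinearMap.map_le_range

theorem idealImage_comap_of_le_one {N : Submodule R K} (h : N ≤ 1) :
    idealImage K (N.comap (Algebra.linearMap R K)) = N := by
  rwa [idealImage, Submodule.map_comap_eq, inf_eq_right, ← Submodule.one_eq_range]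

theorem idealImage_injective_of_injective (h : Function.Injective (algebraMap R K)) :
    Function.Injective (idealImage (A := R) K) :=
  Submodule.map_injective_of_injective h

theorem isDivisorialWrt_comap {N Y : Submodule R K} (h1 : N ≤ 1) (hN : N ≠ ⊥) (hY : N = 1 / Y) :
    IsDivisorialWrt K (N.comap (Algebra.linearMap R K)) := by
  refine ⟨fun hbot => hN ?_, ?_⟩
  · rw [← idealImage_comap_of_le_one h1, hbot, idealImage_bot]
  · rw [idealImage_comap_of_le_one h1, hY, Submodule.one_div_one_div_one_div]

end IdealImage

theorem IsMoriWrt.of_injective {R S K L : Type*} [CommRing R] [CommRing S] [CommRing K]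
    [CommRing L] [Algebra R K] [Algebra S L] (hR : IsMoriWrt K R) (φ : Ideal S → Ideal R)
    (hmono : Monotone φ) (hinj : Function.Injective φ)
    (hdiv : ∀ J, IsDivisorialWrt L J → IsDivisorialWrt K (φ J)) : IsMoriWrt L S := by
  intro f hf hdivf
  obtain ⟨N, hN⟩ := hR (φ ∘ f) (hmono.comp hf) fun n => hdiv _ (hdivf n)
  exact ⟨N, fun n hn => hinj (hN n hn)⟩

section Subalgebra

variable {R K : Type*} [CommRing R] [CommRing K] [Algebra R K] (T : Subalgebra R K)

theorem restrictScalars_idealImage_le (J : Ideal T) :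
    (idealImage K J).restrictScalars R ≤ Subalgebra.toSubmodule T := by
  rintro _ ⟨t, -, rfl⟩
  exact t.2

theorem IsDivisorialWrt.exists_restrictScalars_idealImage_eq_one_div {W : Submodule R K}
    (hT : Subalgebra.toSubmodule T = 1 / W) {J : Ideal T} (hJ : IsDivisorialWrt K J) :
    ∃ Y : Submodule R K, (idealImage K J).restrictScalars R = 1 / Y := by
  have h := congrArg (Submodule.restrictScalars R) hJ.2
  rw [Submodule.restrictScalars_div, Submodule.restrictScalars_div,
    Subalgebra.restrictScalars_one_eq_toSubmodule, hT, Submodule.div_div] at h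
  exact ⟨_, h⟩

end Subalgebra

theorem IsMoriWrt.of_subalgebra {R K : Type*} [CommRing R] [Field K] [Algebra R K]
    (hR : IsMoriWrt K R) (T : Subalgebra R K) {W : Submodule R K}
    (hT : Subalgebra.toSubmodule T = 1 / W) {α : K} (hα : α ≠ 0)
    (hαT : α • Subalgebra.toSubmodule T ≤ 1) : IsMoriWrt K T := by
  set M : Ideal T → Submodule R K := fun J => (idealImage K J).restrictScalars R
  have hM1 (J : Ideal T) : α • M J ≤ 1 :=
    (smul_mono_right α (restrictScalars_idealImage_le T J)).trans hαT
  have hinjT := idealImage_injective_of_injective (R := T) (K := K) Subtype.val_injective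
  refine hR.of_injective (fun J => (α • M J).comap (Algebra.linearMap R K)) ?_ ?_ ?_
  · intro J J' h
    exact Submodule.comap_mono (smul_mono_right α (Submodule.map_mono h))
  · intro J J' h
    have h' := congrArg (idealImage K) h
    simp only [idealImage_comap_of_le_one (hM1 _)] at h'
    exact hinjT (Submodule.restrictScalars_injective R T K (MulAction.injective₀ hα h'))
  · intro J hJ
    obtain ⟨Y, hY⟩ := hJ.exists_restrictScalars_idealImage_eq_one_div T hT
    refine isDivisorialWrt_comap (hM1 J) ?_ (Y := α⁻¹ • Y) ?_
    · rw [Ne, ← Submodule.smul_bot' α, (MulAction.injective₀ hα).eq_iff,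
        Submodule.restrictScalars_eq_bot_iff, ← idealImage_bot, hinjT.eq_iff]
      exact hJ.1
    · simp only [M, hY, Submodule.smul_div hα]

theorem toSubmodule_endRing {R : Type*} [CommRing R] [IsDomain R] (I : Ideal R) :
    Subalgebra.toSubmodule (endRing I) =
      idealImage (FractionRing R) I / idealImage (FractionRing R) I :=
  rfl

theorem stmt_14 {R : Type*} [CommRing R] [IsDomain R]
    (hMori : IsMoriWrt (FractionRing R) R)
    (I : Ideal R) (hdiv : IsDivisorialWrt (FractionRing R) I) :
    IsMoriWrt (FractionRing R) (endRing I) := by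
  set 𝕀 := idealImage (FractionRing R) I
  obtain ⟨a, haI, ha0⟩ := Submodule.exists_mem_ne_zero_of_ne_bot hdiv.1
  have hT : Subalgebra.toSubmodule (endRing I) = 1 / (1 / 𝕀 * 𝕀) := by
    rw [toSubmodule_endRing, ← Submodule.div_div, ← hdiv.2]
  have ha : algebraMap R (FractionRing R) a ≠ 0 :=
    IsFractionRing.to_map_ne_zero_of_mem_nonZeroDivisors (mem_nonZeroDivisors_of_ne_zero ha0)
  refine hMori.of_subalgebra _ hT ha fun y hy => ?_
  obtain ⟨x, hx, rfl⟩ := (Submodule.mem_smul_pointwise_iff_exists _ _ _).mp hy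
  rw [smul_eq_mul, mul_comm]
  exact idealImage_le_one I (hx _ ⟨a, haI, rfl⟩)
end

section
/- Let R ⊆ D be an extension of integral domains such that D = R + xR for some x ∈ D. Then D is a quadratic extension of R, i.e., for all s, t ∈ D, st ∈ sR + tR + R. -/
theorem stmt_15 {D : Type*} [CommRing D] [IsDomain D] (R : Subring D) (x : D)
    (hgen : ∀ d : D, ∃ r s : R, d = (r : D) + x * (s : D)) :
    ∀ s t : D, ∃ a b c : R, s * t = s * (a : D) + t * (b : D) + (c : D) := by
  intro s t
  obtain ⟨a₁, b₁, hs⟩ := hgen s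
  obtain ⟨a₂, b₂, ht⟩ := hgen t
  obtain ⟨p, q, hx⟩ := hgen (x * x)
  refine ⟨a₂, a₁ + q * b₁, p * b₁ * b₂ - a₁ * a₂ - q * a₂ * b₁, ?_⟩
  subst hs ht
  push_cast
  linear_combination (b₁ : D) * (b₂ : D) * hx
end

section
/- Let (R, M) be a local one-dimensional integral domain and let a, b be nonzero elements of M. Then for all sufficiently large integers k, every element of the coset a + R b^k is an associate of a in R (i.e., differs from a by a unit factor). -/
lemma prime_eq_max {R : Type*} [CommRing R] [IsDomain R] [IsLocalRing R]
    (hdim : ringKrullDim R = 1) (P : Ideal R) (hP : P.IsPrime) (hP0 : P ≠ ⊥) :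
    P = IsLocalRing.maximalIdeal R := by
  by_contra hne
  have hle : P ≤ IsLocalRing.maximalIdeal R :=
    IsLocalRing.le_maximalIdeal hP.ne_top
  have h1 : (⊥ : PrimeSpectrum R) < ⟨P, hP⟩ := by
    refine lt_of_le_of_ne bot_le ?_
    intro h
    exact hP0 (congrArg PrimeSpectrum.asIdeal h).symm
  have h2 : (⟨P, hP⟩ : PrimeSpectrum R) < ⟨IsLocalRing.maximalIdeal R, inferInstance⟩ := by
    refine lt_of_le_of_ne hle ?_
    intro h
    exact hne (congrArg PrimeSpectrum.asIdeal h)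
  let s : LTSeries (PrimeSpectrum R) :=
    ⟨2, ![⊥, ⟨P, hP⟩, ⟨IsLocalRing.maximalIdeal R, inferInstance⟩], by
      intro i
      fin_cases i <;> simpa using by first | exact h1 | exact h2⟩
  have := Order.LTSeries.length_le_krullDim s
  rw [show ringKrullDim R = Order.krullDim (PrimeSpectrum R) from rfl] at hdim
  rw [hdim] at this
  norm_num [s] at this

theorem stmt_17 {R : Type*} [CommRing R] [IsDomain R] [IsLocalRing R]
    (hdim : ringKrullDim R = 1) (a b : R)
    (ha : a ∈ IsLocalRing.maximalIdeal R) (hb : b ∈ IsLocalRing.maximalIdeal R)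
    (ha0 : a ≠ 0) (hb0 : b ≠ 0) :
    ∃ K : ℕ, ∀ k, K ≤ k → ∀ r : R, Associated a (a + r * b ^ k) := by
  have hrad : b ∈ (Ideal.span {a}).radical := by
    rw [Ideal.radical_eq_sInf]
    refine Ideal.mem_sInf.2 ?_
    rintro J ⟨hJa, hJp⟩
    have haJ : a ∈ J := hJa (Ideal.subset_span rfl)
    have hJ0 : J ≠ ⊥ := fun h => ha0 (by simpa [h] using haJ)
    rw [prime_eq_max hdim J hJp hJ0]
    exact hb
  obtain ⟨n, hn⟩ := hrad
  obtain ⟨c, hc⟩ := Ideal.mem_span_singleton'.1 hn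
  refine ⟨n + 1, fun k hk r => ?_⟩
  have hbk : b ^ k = a * (c * b ^ (k - n)) := by
    have : b ^ k = b ^ n * b ^ (k - n) := by
      rw [← pow_add]; congr 1; omega
    rw [this, ← hc]; ring
  have hmem : r * (c * b ^ (k - n)) ∈ IsLocalRing.maximalIdeal R := by
    have : b ^ (k - n) ∈ IsLocalRing.maximalIdeal R := by
      have hpos : k - n ≠ 0 := by omega
      obtain ⟨m, hm⟩ : ∃ m, k - n = m + 1 := ⟨k - n - 1, by omega⟩
      rw [hm, pow_succ]
      exact Ideal.mul_mem_left _ _ hb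
    exact Ideal.mul_mem_left _ _ (Ideal.mul_mem_left _ _ this)
  have hu : IsUnit (1 + r * (c * b ^ (k - n))) := by
    have := IsLocalRing.isUnit_one_sub_self_of_mem_nonunits
      (a := -(r * (c * b ^ (k - n)))) (by simpa using hmem)
    simpa using this
  obtain ⟨u, hu⟩ := hu
  exact ⟨u, by rw [hu, hbk]; ring⟩
end
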